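/- Let ω be a radial weight in the class D̂ satisfying sup_{0<r<1} (∫₀^r ω̂(t)/(1-t)² dt)^{1/2} (∫_r¹ 1/ω̂(t) dt)^{1/2} < ∞, and define the radial weight v(r) = (1-r)·ω̂(r). Then v belongs to the class D̂, there are constants 0 < c ≤ C with c·(1-r)²ω̂(r) ≤ v̂(r) ≤ C·(1-r)²ω̂(r) for all r ∈ [0,1), and v satisfies both M₁(v) = sup_{0<r<1} (∫_r¹ v̂(s)/(1-s)² ds)^{1/2} (∫₀^r 1/v̂(s) ds)^{1/2} < ∞ and M₂(v) = sup_{0<r<1} (∫₀^r v̂(s)/(1-s)⁴ ds)^{1/2} (∫_r¹ (1-s)²/v̂(s) ds)^{1/2} < ∞. -/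

import Mathlib

open MeasureTheory Real Set Filter

noncomputable section

/-- `hatw v r = ∫_r^1 v(s) ds`. -/
def hatw (v : ℝ → ℝ) (r : ℝ) : ℝ := ∫ s in r..1, v s

/-- A radial weight: measurable, positive on `[0,1)`, integrable on `(0,1)`. -/
def RadialWeight (v : ℝ → ℝ) : Prop :=
  Measurable v ∧ (∀ r ∈ Set.Ico (0:ℝ) 1, 0 < v r) ∧
    MeasureTheory.IntegrableOn v (Set.Ioo 0 1)

/-- Membership in the class `D̂`. -/
def DoublingD (v : ℝ → ℝ) : Prop :=
  ∃ C : ℝ, 1 ≤ C ∧ ∀ r ∈ Set.Ico (0:ℝ) 1, hatw v r ≤ C * hatw v ((1+r)/2)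

/-- Squared Dirichlet-type norm `‖f‖_{D_v}^2`. -/
def DvSq (v : ℝ → ℝ) (f : ℂ → ℂ) : ENNReal :=
  (‖f 0‖₊ : ENNReal)^2 +
    (ENNReal.ofReal Real.pi)⁻¹ *
      ∫⁻ z in Metric.ball (0:ℂ) 1, (‖deriv f z‖₊ : ENNReal)^2 * ENNReal.ofReal (v ‖z‖)

/-- The Muckenhoupt type quantity `M₁(v)`. -/
def M1v (v : ℝ → ℝ) : ENNReal :=
  ⨆ r ∈ Set.Ioo (0:ℝ) 1,
    (∫⁻ s in Set.Ioo r 1, ENNReal.ofReal (hatw v s / (1-s)^2)) ^ (1/2 : ℝ) *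
    (∫⁻ s in Set.Ioo (0:ℝ) r, ENNReal.ofReal (1 / hatw v s)) ^ (1/2 : ℝ)

/-- The Muckenhoupt type quantity `M₂(v)`. -/
def M2v (v : ℝ → ℝ) : ENNReal :=
  ⨆ r ∈ Set.Ioo (0:ℝ) 1,
    (∫⁻ s in Set.Ioo (0:ℝ) r, ENNReal.ofReal (hatw v s / (1-s)^4)) ^ (1/2 : ℝ) *
    (∫⁻ s in Set.Ioo r 1, ENNReal.ofReal ((1-s)^2 / hatw v s)) ^ (1/2 : ℝ)

/-- The moment `v_x = ∫_0^1 s^x v(s) ds`. -/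
def vx (v : ℝ → ℝ) (x : ℕ) : ℝ := ∫ s in (0:ℝ)..1, s^x * v s

/-- `M_∞(s,f)`, the maximum of `|f|` on the circle of radius `s`. -/
def Minf (f : ℂ → ℂ) (s : ℝ) : ℝ := sSup ((fun z => ‖f z‖) '' Metric.sphere (0:ℂ) s)

/-- `M₂(r,h)`. -/
def M2mean (h : ℂ → ℂ) (r : ℝ) : ℝ :=
  Real.sqrt ((2*Real.pi)⁻¹ * ∫ θ in (-Real.pi)..Real.pi, ‖h ((r:ℂ) * Complex.exp (θ * Complex.I))‖^2)

/-- The norm of `B(2,∞)` (with values in `[0,∞]`). -/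
def B2infE (g : ℂ → ℂ) : ENNReal :=
  (‖g 0‖₊ : ENNReal) +
    ⨆ r ∈ Set.Ioo (0:ℝ) 1, ENNReal.ofReal (M2mean (deriv g) r * Real.sqrt (1-r))

/-- The `p`-th power of the norm of `B(2,p)` (with values in `[0,∞]`). -/
def B2pE (p : ℝ) (g : ℂ → ℂ) : ENNReal :=
  ENNReal.ofReal (‖g 0‖ ^ p) +
    ∫⁻ r in Set.Ioo (0:ℝ) 1, ENNReal.ofReal (M2mean (deriv g) r ^ p * (1-r)^(p/2-1))

/-- The generalized Hilbert operator `H_g`. -/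
def Hg (g f : ℂ → ℂ) (z : ℂ) : ℂ := ∫ t in Set.Ioo (0:ℝ) 1, f t * deriv g (t * z)

/-- The Hilbert operator `H` acting on functions on `[0,1)`. -/
def Hop (φ : ℝ → ℂ) (z : ℂ) : ℂ := ∫ t in Set.Ioo (0:ℝ) 1, φ t / (1 - t * z)

/-- The sublinear Hilbert operator `H̃`. -/
def Htil (φ : ℝ → ℂ) (z : ℂ) : ℂ := ∫ t in Set.Ioo (0:ℝ) 1, (‖φ t‖ : ℂ) / (1 - t * z)

/-- Squared norm in `L²_{V̂₂}`. -/
def L2V2sq (v : ℝ → ℝ) (φ : ℝ → ℂ) : ENNReal :=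
  ∫⁻ t in Set.Ioo (0:ℝ) 1, (‖φ t‖₊ : ENNReal)^2 * ENNReal.ofReal (hatw v t / (1-t)^2)

/-- Taylor coefficient `ĝ(k)` of `g` at the origin. -/
def gcoef (g : ℂ → ℂ) (k : ℕ) : ℂ := iteratedDeriv k g 0 / (Nat.factorial k)


/-!
Since `ŵ` is decreasing, `v̂(r) = ∫_r^1 (1-s) ŵ(s) ds ≤ (1-r)² ŵ(r) / 2`, while keeping only the
integral over `[r, (1+r)/2]` and using `ŵ(r) ≤ C ŵ((1+r)/2)` gives `v̂(r) ≥ 3 (1-r)² ŵ(r) / (8C)`.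
With `v̂ ≍ (1-r)² ŵ`, the doubling of `ŵ` transfers to `v̂`, and the two factors of `M₂(v)` are
bounded by those of the hypothesis on `ω`. `M₁(v)` is bounded outright, since
`∫_r^1 v̂(s)/(1-s)² ds ≲ (1-r) ŵ(r)` and `∫_0^r 1/v̂(s) ds ≲ 1/((1-r) ŵ(r))`.
-/

theorem stronglyMeasurable_setIntegral_preimage_prodMk {α β E : Type*} [MeasurableSpace α]
    [MeasurableSpace β] [NormedAddCommGroup E] [NormedSpace ℝ E] {ν : Measure β} [SFinite ν]
    {f : β → E} (hf : StronglyMeasurable f) {S : Set (α × β)} (hS : MeasurableSet S) :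
    StronglyMeasurable fun a => ∫ b in Prod.mk a ⁻¹' S, f b ∂ν := by
  have hF : StronglyMeasurable (S.indicator fun p => f p.2) :=
    (hf.comp_measurable measurable_snd).indicator hS
  convert hF.integral_prod_right' (ν := ν) using 2 with a
  rw [← integral_indicator (measurable_prodMk_left hS)]
  rfl

-- `w` need not be integrable off `[0, 1]`, so continuity of `hatw w` is not available there.
theorem Measurable.hatw {w : ℝ → ℝ} (hw : Measurable w) : Measurable (hatw w) := by
  have hIoc : Measurable fun r => ∫ s in Ioc r 1, w s :=
    (stronglyMeasurable_setIntegral_preimage_prodMk hw.stronglyMeasurable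
      ((measurableSet_lt measurable_fst measurable_snd).inter
        (measurable_snd (measurableSet_Iic (a := (1:ℝ)))))).measurable
  have hIoc' : Measurable fun r => ∫ s in Ioc 1 r, w s :=
    (stronglyMeasurable_setIntegral_preimage_prodMk hw.stronglyMeasurable
      ((measurable_snd (measurableSet_Ioi (a := (1:ℝ)))).inter
        (measurableSet_le measurable_snd measurable_fst))).measurable
  exact hIoc.sub hIoc'

theorem hatw_one (w : ℝ → ℝ) : hatw w 1 = 0 :=
  intervalIntegral.integral_same

theorem integral_one_sub (a b : ℝ) : ∫ s in a..b, (1 - s) = ((1 - a) ^ 2 - (1 - b) ^ 2) / 2 := by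
  rw [intervalIntegral.integral_comp_sub_left (fun x => x), integral_id]

theorem lintegral_Ioo_inv_one_sub_sq {a b : ℝ} (hab : a ≤ b) (hb : b < 1) :
    ∫⁻ s in Ioo a b, ENNReal.ofReal ((1 - s) ^ 2)⁻¹ = ENNReal.ofReal ((1 - b)⁻¹ - (1 - a)⁻¹) := by
  have hpos : ∀ x ∈ Icc a b, 0 < 1 - x := fun x hx => by linarith [hx.2]
  have hcont : ContinuousOn (fun s : ℝ => ((1 - s) ^ 2)⁻¹) (Icc a b) :=
    ContinuousOn.inv₀ (by fun_prop) fun x hx => pow_ne_zero 2 (hpos x hx).ne'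
  rw [← ofReal_integral_eq_lintegral_ofReal (hcont.integrableOn_Icc.mono_set Ioo_subset_Icc_self)
    (.of_forall fun s => by positivity), ← integral_Ioc_eq_integral_Ioo,
    ← intervalIntegral.integral_of_le hab]
  rw [← uIcc_of_le hab] at hpos hcont
  refine congrArg ENNReal.ofReal (intervalIntegral.integral_eq_sub_of_hasDerivAt
    (f := fun s => (1 - s)⁻¹) (fun x hx => ?_) hcont.intervalIntegrable)
  refine (((hasDerivAt_id x).const_sub 1).inv (hpos x hx).ne').congr_deriv ?_
  simp

theorem setLIntegral_ofReal_le_ofReal_mul {α : Type*} [MeasurableSpace α] {μ : Measure α}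
    {s : Set α} (hs : MeasurableSet s) {f g : α → ℝ} {K : ℝ} (hK : 0 ≤ K)
    (h : ∀ x ∈ s, f x ≤ K * g x) :
    ∫⁻ x in s, ENNReal.ofReal (f x) ∂μ ≤ ENNReal.ofReal K * ∫⁻ x in s, ENNReal.ofReal (g x) ∂μ := by
  rw [← lintegral_const_mul' _ _ ENNReal.ofReal_ne_top]
  exact setLIntegral_mono' hs fun x hx => by
    rw [← ENNReal.ofReal_mul hK]; exact ENNReal.ofReal_le_ofReal (h x hx)

theorem ENNReal.rpow_half_mul_rpow_half_le {a b A B : ENNReal} (ha : a ≤ A) (hb : b ≤ B) :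
    a ^ (1 / 2 : ℝ) * b ^ (1 / 2 : ℝ) ≤ (A * B) ^ (1 / 2 : ℝ) := by
  rw [ENNReal.mul_rpow_of_nonneg _ _ (by norm_num)]
  gcongr

namespace RadialWeight

variable {w : ℝ → ℝ}

theorem intervalIntegrable (hw : RadialWeight w) {a b : ℝ} (ha : a ∈ Icc (0:ℝ) 1)
    (hb : b ∈ Icc (0:ℝ) 1) : IntervalIntegrable w volume a b :=
  (((integrableOn_Icc_iff_integrableOn_Ioo).mpr hw.2.2).mono_set
    (uIcc_subset_Icc ha hb)).intervalIntegrable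

theorem integral_nonneg (hw : RadialWeight w) {a b : ℝ} (ha : 0 ≤ a) (hab : a ≤ b)
    (hb : b ≤ 1) : 0 ≤ ∫ s in a..b, w s := by
  rw [intervalIntegral.integral_of_le hab, integral_Ioc_eq_integral_Ioo]
  exact setIntegral_nonneg measurableSet_Ioo fun x hx =>
    (hw.2.1 x ⟨ha.trans hx.1.le, hx.2.trans_le hb⟩).le

theorem hatw_eq_integral_add_hatw (hw : RadialWeight w) {a b : ℝ} (ha : a ∈ Icc (0:ℝ) 1)
    (hb : b ∈ Icc (0:ℝ) 1) : hatw w a = (∫ s in a..b, w s) + hatw w b :=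
  (intervalIntegral.integral_add_adjacent_intervals (hw.intervalIntegrable ha hb)
    (hw.intervalIntegrable hb ⟨zero_le_one, le_rfl⟩)).symm

theorem hatw_antitoneOn (hw : RadialWeight w) : AntitoneOn (hatw w) (Icc 0 1) :=
  fun a ha b hb hab => by
    rw [hw.hatw_eq_integral_add_hatw ha hb]
    linarith [hw.integral_nonneg ha.1 hab hb.2]

theorem hatw_nonneg (hw : RadialWeight w) {r : ℝ} (hr : r ∈ Icc (0:ℝ) 1) : 0 ≤ hatw w r :=
  hatw_one w ▸ hw.hatw_antitoneOn hr ⟨zero_le_one, le_rfl⟩ hr.2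

theorem hatw_pos (hw : RadialWeight w) {r : ℝ} (hr : r ∈ Ico (0:ℝ) 1) : 0 < hatw w r :=
  intervalIntegral.intervalIntegral_pos_of_pos_on
    (hw.intervalIntegrable ⟨hr.1, hr.2.le⟩ ⟨zero_le_one, le_rfl⟩)
    (fun x hx => hw.2.1 x ⟨hr.1.trans hx.1.le, hx.2⟩) hr.2

end RadialWeight

def oneSubMulHatw (w : ℝ → ℝ) (r : ℝ) : ℝ := (1 - r) * hatw w r

theorem radialWeight_oneSubMulHatw {w : ℝ → ℝ} (hw : RadialWeight w) :
    RadialWeight (oneSubMulHatw w) := by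
  have hmeas : Measurable (oneSubMulHatw w) := (measurable_const.sub measurable_id).mul hw.1.hatw
  refine ⟨hmeas, fun r hr => mul_pos (sub_pos.2 hr.2) (hw.hatw_pos hr), ?_⟩
  refine Measure.integrableOn_of_bounded (M := hatw w 0) measure_Ioo_lt_top.ne
    hmeas.aestronglyMeasurable ((ae_restrict_iff' measurableSet_Ioo).2 (.of_forall ?_))
  intro s hs
  have hs' : s ∈ Icc (0:ℝ) 1 := Ioo_subset_Icc_self hs
  have hW := hw.hatw_nonneg hs'
  rw [oneSubMulHatw, Real.norm_eq_abs, abs_of_nonneg (mul_nonneg (by linarith [hs.2]) hW)]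
  calc (1 - s) * hatw w s ≤ hatw w s := mul_le_of_le_one_left hW (by linarith [hs.1])
    _ ≤ hatw w 0 := hw.hatw_antitoneOn ⟨le_rfl, zero_le_one⟩ hs' hs.1.le

namespace RadialWeight

variable {w : ℝ → ℝ} {C : ℝ}

theorem hatw_oneSubMulHatw_le (hw : RadialWeight w) {r : ℝ} (hr : r ∈ Icc (0:ℝ) 1) :
    hatw (oneSubMulHatw w) r ≤ 1 / 2 * ((1 - r) ^ 2 * hatw w r) :=
  calc hatw (oneSubMulHatw w) r ≤ ∫ s in r..1, (1 - s) * hatw w r := by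
        refine intervalIntegral.integral_mono_on hr.2
          ((radialWeight_oneSubMulHatw hw).intervalIntegrable hr ⟨zero_le_one, le_rfl⟩)
          (Continuous.intervalIntegrable (by fun_prop) _ _) fun s hs => ?_
        have hs' : s ∈ Icc (0:ℝ) 1 := ⟨hr.1.trans hs.1, hs.2⟩
        exact mul_le_mul_of_nonneg_left (hw.hatw_antitoneOn hr hs' hs.1) (sub_nonneg.2 hs.2)
    _ = 1 / 2 * ((1 - r) ^ 2 * hatw w r) := by
        rw [intervalIntegral.integral_mul_const, integral_one_sub]
        ring

theorem mul_hatw_midpoint_le_hatw_oneSubMulHatw (hw : RadialWeight w) {r : ℝ}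
    (hr : r ∈ Icc (0:ℝ) 1) :
    3 / 8 * ((1 - r) ^ 2 * hatw w ((1 + r) / 2)) ≤ hatw (oneSubMulHatw w) r := by
  have hm : (1 + r) / 2 ∈ Icc (0:ℝ) 1 := ⟨by linarith [hr.1], by linarith [hr.2]⟩
  have hrm : r ≤ (1 + r) / 2 := by linarith [hr.2]
  calc 3 / 8 * ((1 - r) ^ 2 * hatw w ((1 + r) / 2))
      = ∫ s in r..(1 + r) / 2, (1 - s) * hatw w ((1 + r) / 2) := by
        rw [intervalIntegral.integral_mul_const, integral_one_sub]
        ring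
    _ ≤ ∫ s in r..(1 + r) / 2, oneSubMulHatw w s := by
        refine intervalIntegral.integral_mono_on hrm
          (Continuous.intervalIntegrable (by fun_prop) _ _)
          ((radialWeight_oneSubMulHatw hw).intervalIntegrable hr hm) fun s hs => ?_
        have hs' : s ∈ Icc (0:ℝ) 1 := ⟨hr.1.trans hs.1, hs.2.trans hm.2⟩
        exact mul_le_mul_of_nonneg_left (hw.hatw_antitoneOn hs' hm hs.2)
          (sub_nonneg.2 hs'.2)
    _ ≤ hatw (oneSubMulHatw w) r := by
        rw [(radialWeight_oneSubMulHatw hw).hatw_eq_integral_add_hatw hr hm]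
        linarith [(radialWeight_oneSubMulHatw hw).hatw_nonneg hm]

theorem mul_hatw_le_hatw_oneSubMulHatw (hw : RadialWeight w) (hC0 : 0 < C)
    (hC : ∀ r ∈ Ico (0:ℝ) 1, hatw w r ≤ C * hatw w ((1 + r) / 2)) {r : ℝ}
    (hr : r ∈ Ico (0:ℝ) 1) :
    (1 - r) ^ 2 * hatw w r ≤ 8 * C / 3 * hatw (oneSubMulHatw w) r :=
  calc (1 - r) ^ 2 * hatw w r ≤ (1 - r) ^ 2 * (C * hatw w ((1 + r) / 2)) := by
        gcongr; exact hC r hr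
    _ = 8 * C / 3 * (3 / 8 * ((1 - r) ^ 2 * hatw w ((1 + r) / 2))) := by ring
    _ ≤ 8 * C / 3 * hatw (oneSubMulHatw w) r := by
        gcongr; exact hw.mul_hatw_midpoint_le_hatw_oneSubMulHatw (Ico_subset_Icc_self hr)

theorem M1v_oneSubMulHatw_le (hw : RadialWeight w) (hC0 : 0 < C)
    (hC : ∀ r ∈ Ico (0:ℝ) 1, hatw w r ≤ C * hatw w ((1 + r) / 2)) :
    M1v (oneSubMulHatw w) ≤ ENNReal.ofReal (4 * C / 3) ^ (1 / 2 : ℝ) := by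
  refine iSup₂_le fun r hr => ?_
  have hWr : 0 < hatw w r := hw.hatw_pos ⟨hr.1.le, hr.2⟩
  have h1r : 0 < 1 - r := sub_pos.2 hr.2
  have hX : ∫⁻ s in Ioo r 1, ENNReal.ofReal (hatw (oneSubMulHatw w) s / (1 - s) ^ 2)
      ≤ ENNReal.ofReal (1 / 2 * hatw w r) * ENNReal.ofReal (1 - r) := by
    rw [← volume_Ioo, ← setLIntegral_const]
    refine setLIntegral_mono' measurableSet_Ioo fun s hs => ENNReal.ofReal_le_ofReal ?_
    have hs' : s ∈ Icc (0:ℝ) 1 := ⟨hr.1.le.trans hs.1.le, hs.2.le⟩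
    rw [div_le_iff₀ (by nlinarith [hs.2])]
    calc hatw (oneSubMulHatw w) s ≤ 1 / 2 * ((1 - s) ^ 2 * hatw w s) :=
          hw.hatw_oneSubMulHatw_le hs'
      _ ≤ 1 / 2 * ((1 - s) ^ 2 * hatw w r) := by
          gcongr; exact hw.hatw_antitoneOn ⟨hr.1.le, hr.2.le⟩ hs' hs.1.le
      _ = 1 / 2 * hatw w r * (1 - s) ^ 2 := by ring
  have hY : ∫⁻ s in Ioo 0 r, ENNReal.ofReal (1 / hatw (oneSubMulHatw w) s)
      ≤ ENNReal.ofReal (8 * C / 3 / hatw w r) * ENNReal.ofReal ((1 - r)⁻¹) := by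
    refine (setLIntegral_ofReal_le_ofReal_mul (g := fun s => ((1 - s) ^ 2)⁻¹)
      (K := 8 * C / 3 / hatw w r) measurableSet_Ioo (by positivity) fun s hs => ?_).trans ?_
    · have hs' : s ∈ Ico (0:ℝ) 1 := ⟨hs.1.le, hs.2.trans hr.2⟩
      have hV := hw.mul_hatw_le_hatw_oneSubMulHatw hC0 hC hs'
      have hWrs : hatw w r ≤ hatw w s :=
        hw.hatw_antitoneOn (Ico_subset_Icc_self hs') ⟨hr.1.le, hr.2.le⟩ hs.2.le
      have h1s : 0 < 1 - s := sub_pos.2 hs'.2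
      have hVs : 0 < hatw (oneSubMulHatw w) s := (radialWeight_oneSubMulHatw hw).hatw_pos hs'
      rw [div_le_iff₀ hVs,
        show 8 * C / 3 / hatw w r * ((1 - s) ^ 2)⁻¹ * hatw (oneSubMulHatw w) s
          = 8 * C / 3 * hatw (oneSubMulHatw w) s / ((1 - s) ^ 2 * hatw w r) by field_simp,
        one_le_div₀ (by positivity)]
      nlinarith [mul_le_mul_of_nonneg_left hWrs (sq_nonneg (1 - s))]
    · gcongr
      rw [lintegral_Ioo_inv_one_sub_sq hr.1.le hr.2]
      exact ENNReal.ofReal_le_ofReal (by linarith)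
  calc (∫⁻ s in Ioo r 1, ENNReal.ofReal (hatw (oneSubMulHatw w) s / (1 - s) ^ 2))
          ^ (1 / 2 : ℝ) *
        (∫⁻ s in Ioo 0 r, ENNReal.ofReal (1 / hatw (oneSubMulHatw w) s)) ^ (1 / 2 : ℝ)
      ≤ (ENNReal.ofReal (1 / 2 * hatw w r) * ENNReal.ofReal (1 - r) *
        (ENNReal.ofReal (8 * C / 3 / hatw w r) * ENNReal.ofReal ((1 - r)⁻¹))) ^ (1 / 2 : ℝ) :=
        ENNReal.rpow_half_mul_rpow_half_le hX hY
    _ = ENNReal.ofReal (4 * C / 3) ^ (1 / 2 : ℝ) := by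
        rw [← ENNReal.ofReal_mul (by positivity), ← ENNReal.ofReal_mul (by positivity),
          ← ENNReal.ofReal_mul (by positivity)]
        congr 2
        field_simp
        ring

theorem M2v_oneSubMulHatw_le (hw : RadialWeight w) (hC0 : 0 < C)
    (hC : ∀ r ∈ Ico (0:ℝ) 1, hatw w r ≤ C * hatw w ((1 + r) / 2)) :
    M2v (oneSubMulHatw w) ≤ ENNReal.ofReal (4 * C / 3) ^ (1 / 2 : ℝ) *
      ⨆ r ∈ Ioo (0:ℝ) 1,
        (∫⁻ t in Ioo (0:ℝ) r, ENNReal.ofReal (hatw w t / (1 - t) ^ 2)) ^ (1 / 2 : ℝ) *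
        (∫⁻ t in Ioo r 1, ENNReal.ofReal (1 / hatw w t)) ^ (1 / 2 : ℝ) := by
  refine iSup₂_le fun r hr => ?_
  have hP : ∫⁻ s in Ioo 0 r, ENNReal.ofReal (hatw (oneSubMulHatw w) s / (1 - s) ^ 4)
      ≤ ENNReal.ofReal (1 / 2) * ∫⁻ t in Ioo 0 r, ENNReal.ofReal (hatw w t / (1 - t) ^ 2) := by
    refine setLIntegral_ofReal_le_ofReal_mul measurableSet_Ioo (by norm_num) fun s hs => ?_
    have h1s : 0 < 1 - s := by linarith [hs.2, hr.2]
    rw [div_le_iff₀ (by positivity), show 1 / 2 * (hatw w s / (1 - s) ^ 2) * (1 - s) ^ 4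
      = 1 / 2 * ((1 - s) ^ 2 * hatw w s) by field_simp]
    exact hw.hatw_oneSubMulHatw_le ⟨hs.1.le, by linarith [hs.2, hr.2]⟩
  have hQ : ∫⁻ s in Ioo r 1, ENNReal.ofReal ((1 - s) ^ 2 / hatw (oneSubMulHatw w) s)
      ≤ ENNReal.ofReal (8 * C / 3) * ∫⁻ t in Ioo r 1, ENNReal.ofReal (1 / hatw w t) := by
    refine setLIntegral_ofReal_le_ofReal_mul measurableSet_Ioo (by positivity) fun s hs => ?_
    have hs' : s ∈ Ico (0:ℝ) 1 := ⟨hr.1.le.trans hs.1.le, hs.2⟩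
    have hWs := hw.hatw_pos hs'
    rw [div_le_iff₀ ((radialWeight_oneSubMulHatw hw).hatw_pos hs'),
      show 8 * C / 3 * (1 / hatw w s) * hatw (oneSubMulHatw w) s
        = 8 * C / 3 * hatw (oneSubMulHatw w) s / hatw w s by field_simp,
      le_div_iff₀ hWs]
    exact hw.mul_hatw_le_hatw_oneSubMulHatw hC0 hC hs'
  calc (∫⁻ s in Ioo 0 r, ENNReal.ofReal (hatw (oneSubMulHatw w) s / (1 - s) ^ 4))
          ^ (1 / 2 : ℝ) *
        (∫⁻ s in Ioo r 1, ENNReal.ofReal ((1 - s) ^ 2 / hatw (oneSubMulHatw w) s)) ^ (1 / 2 : ℝ)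
      ≤ ((ENNReal.ofReal (1 / 2) *
            ∫⁻ t in Ioo 0 r, ENNReal.ofReal (hatw w t / (1 - t) ^ 2)) *
          (ENNReal.ofReal (8 * C / 3) * ∫⁻ t in Ioo r 1, ENNReal.ofReal (1 / hatw w t)))
          ^ (1 / 2 : ℝ) :=
        ENNReal.rpow_half_mul_rpow_half_le hP hQ
    _ = ENNReal.ofReal (4 * C / 3) ^ (1 / 2 : ℝ) *
        ((∫⁻ t in Ioo (0:ℝ) r, ENNReal.ofReal (hatw w t / (1 - t) ^ 2)) ^ (1 / 2 : ℝ) *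
        (∫⁻ t in Ioo r 1, ENNReal.ofReal (1 / hatw w t)) ^ (1 / 2 : ℝ)) := by
        rw [mul_mul_mul_comm, ← ENNReal.ofReal_mul (by norm_num),
          ENNReal.mul_rpow_of_nonneg _ _ (by norm_num),
          ENNReal.mul_rpow_of_nonneg _ _ (by norm_num)]
        congr 3
        ring
    _ ≤ _ := by
        gcongr
        exact le_iSup₂ (f := fun r (_ : r ∈ Ioo (0:ℝ) 1) =>
          (∫⁻ t in Ioo (0:ℝ) r, ENNReal.ofReal (hatw w t / (1 - t) ^ 2)) ^ (1 / 2 : ℝ) *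
          (∫⁻ t in Ioo r 1, ENNReal.ofReal (1 / hatw w t)) ^ (1 / 2 : ℝ)) r hr

end RadialWeight

theorem doublingD_oneSubMulHatw {w : ℝ → ℝ} (hw : RadialWeight w) (hD : DoublingD w) :
    DoublingD (oneSubMulHatw w) := by
  obtain ⟨C, hC1, hC⟩ := hD
  refine ⟨16 * C ^ 2 / 3, by nlinarith, fun r hr => ?_⟩
  have hm : (1 + r) / 2 ∈ Ico (0:ℝ) 1 := ⟨by linarith [hr.1], by linarith [hr.2]⟩
  calc hatw (oneSubMulHatw w) r ≤ 1 / 2 * ((1 - r) ^ 2 * hatw w r) :=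
        hw.hatw_oneSubMulHatw_le (Ico_subset_Icc_self hr)
    _ ≤ 1 / 2 * ((1 - r) ^ 2 * (C * hatw w ((1 + r) / 2))) := by gcongr; exact hC r hr
    _ = 2 * C * ((1 - (1 + r) / 2) ^ 2 * hatw w ((1 + r) / 2)) := by ring
    _ ≤ 2 * C * (8 * C / 3 * hatw (oneSubMulHatw w) ((1 + r) / 2)) :=
        mul_le_mul_of_nonneg_left (hw.mul_hatw_le_hatw_oneSubMulHatw (by linarith) hC hm)
          (by linarith)
    _ = 16 * C ^ 2 / 3 * hatw (oneSubMulHatw w) ((1 + r) / 2) := by ring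

/-- the weight transfer in the proof of Corollary 1.2: if `ω ∈ D̂` satisfies
condition (1.6), then `v(r) = (1-r) ω̂(r)` is a radial weight of class `D̂` with
`v̂(r) ≍ (1-r)² ω̂(r)`, satisfying both `M₁(v) < ∞` and `M₂(v) < ∞`. -/
theorem statement19 (ω : ℝ → ℝ) (hω : RadialWeight ω) (hD : DoublingD ω)
    (hcond : (⨆ r ∈ Set.Ioo (0:ℝ) 1,
        (∫⁻ t in Set.Ioo (0:ℝ) r, ENNReal.ofReal (hatw ω t / (1-t)^2)) ^ (1/2 : ℝ) *
        (∫⁻ t in Set.Ioo r 1, ENNReal.ofReal (1 / hatw ω t)) ^ (1/2 : ℝ)) < ⊤) :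
    RadialWeight (fun r => (1-r) * hatw ω r) ∧
    DoublingD (fun r => (1-r) * hatw ω r) ∧
    (∃ c C : ℝ, 0 < c ∧ c ≤ C ∧ ∀ r ∈ Set.Ico (0:ℝ) 1,
      c * ((1-r)^2 * hatw ω r) ≤ hatw (fun r => (1-r) * hatw ω r) r ∧
      hatw (fun r => (1-r) * hatw ω r) r ≤ C * ((1-r)^2 * hatw ω r)) ∧
    M1v (fun r => (1-r) * hatw ω r) < ⊤ ∧
    M2v (fun r => (1-r) * hatw ω r) < ⊤ := by
  obtain ⟨C, hC1, hC⟩ := hD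
  have hC0 : 0 < C := one_pos.trans_le hC1
  have hsqrt_lt_top : ENNReal.ofReal (4 * C / 3) ^ (1 / 2 : ℝ) < ⊤ :=
    ENNReal.rpow_lt_top_of_nonneg (by norm_num) ENNReal.ofReal_ne_top
  refine ⟨radialWeight_oneSubMulHatw hω, doublingD_oneSubMulHatw hω ⟨C, hC1, hC⟩,
    ⟨3 / (8 * C), 1 / 2, by positivity, ?_, fun r hr => ⟨?_, hω.hatw_oneSubMulHatw_le
      (Ico_subset_Icc_self hr)⟩⟩, ?_, ?_⟩
  · rw [div_le_iff₀ (by positivity)]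
    linarith
  · change _ ≤ hatw (oneSubMulHatw ω) r
    rw [div_mul_eq_mul_div, div_le_iff₀ (by positivity)]
    linarith [hω.mul_hatw_le_hatw_oneSubMulHatw hC0 hC hr]
  · exact (hω.M1v_oneSubMulHatw_le hC0 hC).trans_lt hsqrt_lt_top
  · exact (hω.M2v_oneSubMulHatw_le hC0 hC).trans_lt (ENNReal.mul_lt_top hsqrt_lt_top hcond)
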